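/- arXiv:2103.03771 — 3 statements merged into one kernel-verified Lean document; each statement's English description precedes it below -/
import Mathlib

section
/- For every undirected graph G = ([p], E), the polytope CIM_G (convex hull of characteristic imsets of DAGs with skeleton exactly G) is a face of CIM_p. -/
open scoped Classical

/-- A directed acyclic graph on vertex set `Fin p`. -/
structure DAGraph (p : ℕ) where
  E : Fin p → Fin p → Prop
  acyclic : ∀ i, ¬ Relation.TransGen E i i

/-- The characteristic imset of a directed graph given by the relation `E`. -/
noncomputable def imsetRel {p : ℕ} (E : Fin p → Fin p → Prop) (S : Finset (Fin p)) : ℝ :=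
  if ∃ i ∈ S, ∀ j ∈ S, j ≠ i → E j i then 1 else 0

/-- The skeleton (underlying undirected graph) of a DAG. -/
def DAGraph.skeleton {p : ℕ} (G : DAGraph p) : SimpleGraph (Fin p) where
  Adj a b := G.E a b ∨ G.E b a
  symm := ⟨fun a b h => Or.symm h⟩
  loopless := ⟨fun a h =>
    h.elim (fun h' => G.acyclic a (Relation.TransGen.single h'))
      (fun h' => G.acyclic a (Relation.TransGen.single h'))⟩

/-- The characteristic imset of a DAG. -/
noncomputable def DAGraph.cim {p : ℕ} (G : DAGraph p) : Finset (Fin p) → ℝ := imsetRel G.E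

/-- `G.vStruct a b c` : `a → b ← c` is a v-structure (with `a`, `c` non-adjacent). -/
def DAGraph.vStruct {p : ℕ} (G : DAGraph p) (a b c : Fin p) : Prop :=
  a ≠ c ∧ G.E a b ∧ G.E c b ∧ ¬ G.skeleton.Adj a c

/-- The relation obtained from `E` by reversing the single edge `i → j`. -/
def reverseRel {p : ℕ} (E : Fin p → Fin p → Prop) (i j : Fin p) : Fin p → Fin p → Prop :=
  fun a b => (E a b ∧ ¬(a = i ∧ b = j)) ∨ (a = j ∧ b = i)

/-- The set of characteristic imsets of all DAGs on `p` nodes. -/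
noncomputable def cimVertices (p : ℕ) : Set (Finset (Fin p) → ℝ) :=
  {x | ∃ G : DAGraph p, x = G.cim}

/-- The characteristic imset polytope `CIM_p`. -/
noncomputable def cimPolytope (p : ℕ) : Set (Finset (Fin p) → ℝ) :=
  convexHull ℝ (cimVertices p)

/-- Dot product of vectors indexed by subsets of `[p]`. -/
noncomputable def dotF {p : ℕ} (w x : Finset (Fin p) → ℝ) : ℝ :=
  ∑ S : Finset (Fin p), w S * x S

/-- `F` is a face of `P`: the set of maximizers of some linear functional over `P`. -/
def IsFaceOf {p : ℕ} (F P : Set (Finset (Fin p) → ℝ)) : Prop :=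
  ∃ (w : Finset (Fin p) → ℝ) (a : ℝ), (∀ x ∈ P, dotF w x ≤ a) ∧ F = {x ∈ P | dotF w x = a}

/-- The segment between distinct `u` and `v` is an edge (one-dimensional face) of `P`. -/
def IsEdgeOf {p : ℕ} (u v : Finset (Fin p) → ℝ) (P : Set (Finset (Fin p) → ℝ)) : Prop :=
  u ≠ v ∧ ∃ (w : Finset (Fin p) → ℝ) (a : ℝ), (∀ x ∈ P, dotF w x ≤ a) ∧
    {x ∈ P | dotF w x = a} = segment ℝ u v

/-!
Weigh every 2-subset `{i, j}` by `+1` if `ij` is an edge of `G` and by `-1` otherwise. The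
characteristic imset of a DAG is `1` on `{i, j}` exactly when `ij` is an edge of its skeleton, and
lies in `[0, 1]` everywhere, so this functional is at most the number of edges of `G` on every
vertex of `CIM_p`, with equality exactly for the DAGs with skeleton `G`. The maximizers of a linear
functional over a convex hull form the convex hull of the maximizing generators, because the open
half-space below the maximum together with that hull is convex.
-/

section ExposedFace
variable {𝕜 E : Type*} [Field 𝕜] [LinearOrder 𝕜] [IsStrictOrderedRing 𝕜] [AddCommGroup E]
  [Module 𝕜 E]

theorem convex_halfSpace_lt_union (f : E →ₗ[𝕜] 𝕜) {a : 𝕜} {C : Set E} (hC : Convex 𝕜 C)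
    (hCa : ∀ x ∈ C, f x = a) : Convex 𝕜 ({x | f x < a} ∪ C) := by
  have mixed : ∀ x y, f x < a → y ∈ C → ∀ α β : 𝕜, 0 ≤ α → 0 ≤ β → α + β = 1 →
      α • x + β • y ∈ {x | f x < a} ∪ C := by
    intro x y hx hy α β hα hβ hαβ
    rcases hα.eq_or_lt with rfl | hα
    · right; simpa [show β = 1 by linarith] using hy
    · left
      obtain rfl : β = 1 - α := by linarith
      simp only [Set.mem_ofPred_eq, map_add, map_smul, smul_eq_mul, hCa y hy]
      linarith [mul_lt_mul_of_pos_left hx hα]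
  rintro x (hx | hx) y (hy | hy) α β hα hβ hαβ
  · exact Or.inl (convex_halfSpace_lt f.isLinear a hx hy hα hβ hαβ)
  · exact mixed x y hx hy α β hα hβ hαβ
  · rw [add_comm]; exact mixed y x hy hx β α hβ hα (by rw [add_comm, hαβ])
  · exact Or.inr (hC hx hy hα hβ hαβ)

theorem sep_convexHull_eq_of_forall_le (f : E →ₗ[𝕜] 𝕜) {s : Set E} {a : 𝕜}
    (hs : ∀ x ∈ s, f x ≤ a) :
    {x ∈ convexHull 𝕜 s | f x = a} = convexHull 𝕜 {x ∈ s | f x = a} := by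
  set t := {x ∈ s | f x = a}
  have ht : ∀ x ∈ convexHull 𝕜 t, f x = a :=
    convexHull_min (fun x hx => hx.2) (convex_hyperplane f.isLinear a)
  refine Set.Subset.antisymm ?_ fun x hx => ⟨convexHull_mono (fun y hy => hy.1) hx, ht x hx⟩
  have hs' : s ⊆ {x | f x < a} ∪ convexHull 𝕜 t := fun y hy =>
    (hs y hy).lt_or_eq.imp id fun h => subset_convexHull 𝕜 t ⟨hy, h⟩
  rintro x ⟨hx, hfx⟩
  have hconv := convex_halfSpace_lt_union f (convex_convexHull 𝕜 t) ht
  exact (convexHull_min hs' hconv hx).resolve_left (by simp [hfx])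

end ExposedFace

theorem isFaceOf_convexHull {p : ℕ} {V : Set (Finset (Fin p) → ℝ)} (w : Finset (Fin p) → ℝ)
    {a : ℝ} (hV : ∀ x ∈ V, dotF w x ≤ a) :
    IsFaceOf (convexHull ℝ {x ∈ V | dotF w x = a}) (convexHull ℝ V) := by
  let f := dotProductBilin ℝ ℝ w
  refine ⟨w, a, fun x hx => convexHull_min hV (convex_halfSpace_le f.isLinear a) hx, ?_⟩
  exact (sep_convexHull_eq_of_forall_le f hV).symm

theorem ite_one_neg_one_mul_le {R : Type*} [Ring R] [LinearOrder R] [IsOrderedRing R]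
    (c : Prop) [Decidable c] {x : R} (h0 : 0 ≤ x) (h1 : x ≤ 1) :
    (if c then 1 else -1) * x ≤ if c then 1 else 0 := by
  split_ifs
  · simpa using h1
  · simpa using h0

theorem ite_one_neg_one_mul_eq_iff {R : Type*} [Ring R]
    (c : Prop) [Decidable c] {x : R} :
    (if c then 1 else -1) * x = (if c then 1 else 0) ↔ x = if c then 1 else 0 := by
  split_ifs <;> simp

theorem SimpleGraph.eq_iff_forall_card_eq_two_isClique {V : Type*} {G H : SimpleGraph V} :
    G = H ↔ ∀ S : Finset V, S.card = 2 → (G.IsClique (S : Set V) ↔ H.IsClique (S : Set V)) := by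
  refine ⟨fun h _ _ => h ▸ Iff.rfl, fun h => ?_⟩
  ext i j
  by_cases hij : i = j
  · simp [hij]
  · simpa [SimpleGraph.isClique_pair, hij] using h {i, j} (Finset.card_pair hij)

namespace DAGraph
variable {p : ℕ}

theorem cim_nonneg (D : DAGraph p) (S : Finset (Fin p)) : 0 ≤ D.cim S := by
  unfold cim imsetRel; split_ifs <;> norm_num

theorem cim_le_one (D : DAGraph p) (S : Finset (Fin p)) : D.cim S ≤ 1 := by
  unfold cim imsetRel; split_ifs <;> norm_num

theorem cim_of_card_eq_two (D : DAGraph p) {S : Finset (Fin p)} (hS : S.card = 2) :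
    D.cim S = if D.skeleton.IsClique (S : Set (Fin p)) then 1 else 0 := by
  obtain ⟨i, j, hij, rfl⟩ := Finset.card_eq_two.mp hS
  unfold cim imsetRel
  simp [hij, hij.symm, skeleton, or_comm]

end DAGraph

section EdgeWeight
variable {p : ℕ}

noncomputable def edgeWeight (G : SimpleGraph (Fin p)) (S : Finset (Fin p)) : ℝ :=
  if S.card = 2 then if G.IsClique (S : Set (Fin p)) then 1 else -1 else 0

noncomputable def edgeIndicator (G : SimpleGraph (Fin p)) (S : Finset (Fin p)) : ℝ :=
  if S.card = 2 then if G.IsClique (S : Set (Fin p)) then 1 else 0 else 0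

theorem edgeWeight_mul_cim_le (G : SimpleGraph (Fin p)) (D : DAGraph p) (S : Finset (Fin p)) :
    edgeWeight G S * D.cim S ≤ edgeIndicator G S := by
  by_cases hS : S.card = 2
  · simp only [edgeWeight, edgeIndicator, if_pos hS]
    exact ite_one_neg_one_mul_le _ (D.cim_nonneg S) (D.cim_le_one S)
  · simp [edgeWeight, edgeIndicator, hS]

theorem edgeWeight_mul_cim_eq_iff (G : SimpleGraph (Fin p)) (D : DAGraph p)
    (S : Finset (Fin p)) : edgeWeight G S * D.cim S = edgeIndicator G S ↔
      (S.card = 2 → (D.skeleton.IsClique (S : Set (Fin p)) ↔ G.IsClique (S : Set (Fin p)))) := by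
  by_cases hS : S.card = 2
  · simp only [edgeWeight, edgeIndicator, if_pos hS, ite_one_neg_one_mul_eq_iff,
      D.cim_of_card_eq_two hS]
    by_cases hD : D.skeleton.IsClique (S : Set (Fin p)) <;>
      by_cases hG : G.IsClique (S : Set (Fin p)) <;> simp [hS, hD, hG]
  · simp [edgeWeight, edgeIndicator, hS]

theorem dotF_edgeWeight_cim_le (G : SimpleGraph (Fin p)) (D : DAGraph p) :
    dotF (edgeWeight G) D.cim ≤ ∑ S, edgeIndicator G S :=
  Finset.sum_le_sum fun S _ => edgeWeight_mul_cim_le G D S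

theorem dotF_edgeWeight_cim_eq_iff (G : SimpleGraph (Fin p)) (D : DAGraph p) :
    dotF (edgeWeight G) D.cim = ∑ S, edgeIndicator G S ↔ D.skeleton = G := by
  rw [dotF, Finset.sum_eq_sum_iff_of_le fun S _ => edgeWeight_mul_cim_le G D S,
    SimpleGraph.eq_iff_forall_card_eq_two_isClique]
  simp only [Finset.mem_univ, true_imp_iff, edgeWeight_mul_cim_eq_iff]

end EdgeWeight

/-- For every undirected graph `G` on `[p]`, the polytope `CIM_G`
(convex hull of characteristic imsets of DAGs with skeleton exactly `G`) is a face of `CIM_p`. -/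
theorem stmt4 {p : ℕ} (G : SimpleGraph (Fin p)) :
    IsFaceOf (convexHull ℝ {x | ∃ D : DAGraph p, D.skeleton = G ∧ x = D.cim})
      (cimPolytope p) := by
  have hle : ∀ x ∈ cimVertices p, dotF (edgeWeight G) x ≤ ∑ S, edgeIndicator G S := by
    rintro _ ⟨D, rfl⟩
    exact dotF_edgeWeight_cim_le G D
  rw [cimPolytope]
  convert isFaceOf_convexHull (edgeWeight G) hle using 3
  ext x
  constructor
  · rintro ⟨D, hD, rfl⟩
    exact ⟨⟨D, rfl⟩, (dotF_edgeWeight_cim_eq_iff G D).mpr hD⟩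
  · rintro ⟨⟨D, rfl⟩, hD⟩
    exact ⟨D, (dotF_edgeWeight_cim_eq_iff G D).mp hD, rfl⟩
end

section
/- Let G' = ([p−1], E') be a vertex-disjoint union of complete graphs K_{p₁}, ..., K_{p_m}, and let G = ([p], E) be obtained by adding a vertex p adjacent to all of [p−1]. Then the number of Markov equivalence classes of DAGs with skeleton G equals 2^{p−1} − Σ_{s=1}^{m} (2^{p_s} − 1). -/
open scoped Classical

/-- The graph on `Fin (n+1)` obtained from a vertex-disjoint union of complete graphs on
`Fin n` (with components given by `comp : Fin n → Fin m`) by adding the extra vertex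
`Fin.last n` adjacent to all other vertices. -/
def starJoin (n m : ℕ) (comp : Fin n → Fin m) : SimpleGraph (Fin (n + 1)) where
  Adj a b := a ≠ b ∧ (a = Fin.last n ∨ b = Fin.last n ∨
    ∃ (ha : a ≠ Fin.last n) (hb : b ≠ Fin.last n),
      comp (a.castPred ha) = comp (b.castPred hb))
  symm := by
    refine ⟨?_⟩
    rintro a b ⟨hne, h⟩
    refine ⟨hne.symm, ?_⟩
    rcases h with h | h | ⟨ha, hb, hc⟩
    · exact Or.inr (Or.inl h)
    · exact Or.inl h
    · exact Or.inr (Or.inr ⟨hb, ha, hc.symm⟩)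
  loopless := ⟨fun a h => h.1 rfl⟩

/-! A DAG `D` with skeleton `starJoin n m comp` has `D.cim S = 1` iff `S` has a sink. A nonempty
`S` has a sink iff it is a clique, i.e. its part in `Fin n` lies in one component, or the apex is
a sink of `S`, i.e. that part is contained in the parent set `A` of the apex. So `D.cim` depends
only on `A`, and every `A` occurs: orient the edges upwards along a ranking that puts `A` below
the apex and the rest of `Fin n` above it. If `A` lies in one component, the second alternative
is subsumed by the first, so all such `A` give the same imset. Otherwise `{apex} ∪ A` has a sink
only for parent sets containing `A`, so `A` is determined by the imset. Hence the count is
`#{A not in one component} + 1 = 2 ^ n - ∑ₛ (2 ^ pₛ - 1)`. -/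

open Finset

namespace DAGraph

variable {p : ℕ} (D : DAGraph p)

/-- A maximal element of `S` for the strict order `TransGen D.E` is a sink of the clique `S`. -/
lemma exists_sink_of_isClique {S : Finset (Fin p)} (hS : S.Nonempty)
    (hclique : D.skeleton.IsClique (S : Set (Fin p))) :
    ∃ i ∈ S, ∀ j ∈ S, j ≠ i → D.E j i := by
  let below : Fin p → Fin p → Prop := fun a b => Relation.TransGen D.E b a
  have : IsTrans (Fin p) below := ⟨fun _ _ _ hab hbc => hbc.trans hab⟩
  have : Std.Irrefl below := ⟨D.acyclic⟩
  obtain ⟨i, hi, hmax⟩ := (Finite.wellFounded_of_trans_of_irrefl below).has_min _ hS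
  exact ⟨i, hi, fun j hj hji =>
    (hclique hj hi hji).resolve_right fun hij => hmax j hj (.single hij)⟩

def ofRank (G : SimpleGraph (Fin p)) (f : Fin p → ℕ) : DAGraph p where
  E a b := G.Adj a b ∧ f a < f b
  acyclic i hi := by
    have rank_lt : ∀ {a b}, Relation.TransGen (fun a b => G.Adj a b ∧ f a < f b) a b →
        f a < f b := by
      intro a b h
      induction h with
      | single h => exact h.2
      | tail _ h ih => exact ih.trans h.2
    exact (rank_lt hi).false

lemma skeleton_ofRank (G : SimpleGraph (Fin p)) {f : Fin p → ℕ} (hf : Function.Injective f) :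
    (ofRank G f).skeleton = G := by
  ext a b
  refine ⟨fun h => h.elim And.left fun h => h.1.symm, fun h => ?_⟩
  rcases lt_or_gt_of_ne (hf.ne h.ne) with hlt | hlt
  exacts [Or.inl ⟨h, hlt⟩, Or.inr ⟨h.symm, hlt⟩]

end DAGraph

section StarJoin

variable {n m : ℕ} (comp : Fin n → Fin m)

lemma starJoin_adj_last (v : Fin n) : (starJoin n m comp).Adj v.castSucc (Fin.last n) :=
  ⟨(Fin.castSucc_lt_last v).ne, Or.inr (Or.inl rfl)⟩

lemma starJoin_adj_castSucc {u v : Fin n} :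
    (starJoin n m comp).Adj u.castSucc v.castSucc ↔ u ≠ v ∧ comp u = comp v := by
  simp [starJoin, Fin.castSucc_ne_last]

noncomputable def baseTrace (S : Finset (Fin (n + 1))) : Finset (Fin n) :=
  S.preimage Fin.castSucc (Fin.castSucc_injective n).injOn

@[simp]
lemma mem_baseTrace {S : Finset (Fin (n + 1))} {v : Fin n} :
    v ∈ baseTrace S ↔ v.castSucc ∈ S :=
  mem_preimage

def IsLocal (A : Finset (Fin n)) : Prop := ∀ u ∈ A, ∀ v ∈ A, comp u = comp v

lemma IsLocal.mono {A B : Finset (Fin n)} (hB : IsLocal comp B) (hAB : A ⊆ B) :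
    IsLocal comp A :=
  fun u hu v hv => hB u (hAB hu) v (hAB hv)

lemma isClique_starJoin_of_isLocal {S : Finset (Fin (n + 1))}
    (hS : IsLocal comp (baseTrace S)) :
    (starJoin n m comp).IsClique (S : Set (Fin (n + 1))) := by
  intro a ha b hb hab
  induction a using Fin.lastCases with
  | last =>
    induction b using Fin.lastCases with
    | last => exact absurd rfl hab
    | cast v => exact (starJoin_adj_last comp v).symm
  | cast u =>
    induction b using Fin.lastCases with
    | last => exact starJoin_adj_last comp u
    | cast v =>
      exact (starJoin_adj_castSucc comp).2
        ⟨fun h => hab (h ▸ rfl), hS u (by simpa using ha) v (by simpa using hb)⟩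

noncomputable def lastParents (D : DAGraph (n + 1)) : Finset (Fin n) :=
  univ.filter fun v => D.E v.castSucc (Fin.last n)

noncomputable def starCim (A : Finset (Fin n)) (S : Finset (Fin (n + 1))) : ℝ :=
  if S.Nonempty ∧ (IsLocal comp (baseTrace S) ∨
      (Fin.last n ∈ S ∧ baseTrace S ⊆ A))
  then 1 else 0

variable {comp} in
lemma exists_sink_iff_of_skeleton_eq_starJoin {D : DAGraph (n + 1)}
    (hD : D.skeleton = starJoin n m comp) (S : Finset (Fin (n + 1))) :
    (∃ i ∈ S, ∀ j ∈ S, j ≠ i → D.E j i) ↔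
      S.Nonempty ∧ (IsLocal comp (baseTrace S) ∨
        (Fin.last n ∈ S ∧
          baseTrace S ⊆ lastParents D)) := by
  constructor
  · rintro ⟨i, hi, hsink⟩
    refine ⟨⟨i, hi⟩, ?_⟩
    induction i using Fin.lastCases with
    | last =>
      exact Or.inr ⟨hi, fun v hv => by
        simpa [lastParents] using hsink _ (mem_baseTrace.1 hv) (Fin.castSucc_ne_last v)⟩
    | cast u =>
      have same_comp : ∀ v : Fin n, v.castSucc ∈ S → comp v = comp u := by
        intro v hv
        by_cases hvu : v = u
        · rw [hvu]
        · have hadj : D.skeleton.Adj v.castSucc u.castSucc :=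
            Or.inl (hsink _ hv (by simpa using hvu))
          rw [hD, starJoin_adj_castSucc] at hadj
          exact hadj.2
      exact Or.inl fun v hv w hw =>
        (same_comp v (mem_baseTrace.1 hv)).trans (same_comp w (mem_baseTrace.1 hw)).symm
  · rintro ⟨hne, hlocal | ⟨hlast, hpar⟩⟩
    · exact D.exists_sink_of_isClique hne (hD ▸ isClique_starJoin_of_isLocal comp hlocal)
    · refine ⟨Fin.last n, hlast, fun j hj hjl => ?_⟩
      obtain ⟨v, rfl⟩ := Fin.exists_castSucc_eq.2 hjl
      simpa [lastParents] using hpar (mem_baseTrace.2 hj)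

variable {comp} in
lemma cim_eq_starCim {D : DAGraph (n + 1)} (hD : D.skeleton = starJoin n m comp) :
    D.cim = starCim comp (lastParents D) := by
  funext S
  simp only [DAGraph.cim, imsetRel, starCim, exists_sink_iff_of_skeleton_eq_starJoin hD]

noncomputable def apexRank (A : Finset (Fin n)) : Fin (n + 1) → ℕ :=
  Fin.lastCases n fun v => if v ∈ A then v else n + 1 + v

lemma apexRank_injective (A : Finset (Fin n)) : Function.Injective (apexRank A) := by
  intro x y h
  induction x using Fin.lastCases <;> induction y using Fin.lastCases <;>
    simp only [apexRank, Fin.lastCases_last, Fin.lastCases_castSucc] at h <;>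
    (try split_ifs at h) <;> simp only [Fin.ext_iff, Fin.val_castSucc] <;> omega

lemma lastParents_ofRank_apexRank (A : Finset (Fin n)) :
    lastParents (DAGraph.ofRank (starJoin n m comp) (apexRank A)) = A := by
  ext v
  simp only [lastParents, DAGraph.ofRank, apexRank, mem_filter, mem_univ, true_and,
    Fin.lastCases_last, Fin.lastCases_castSucc, starJoin_adj_last comp v]
  split_ifs with hv <;> simp only [hv, iff_true, iff_false, not_lt] <;> omega

lemma cims_eq_range_starCim :
    {x : Finset (Fin (n + 1)) → ℝ |
        ∃ D : DAGraph (n + 1), D.skeleton = starJoin n m comp ∧ x = D.cim} =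
      Set.range (starCim comp) := by
  ext x
  constructor
  · rintro ⟨D, hD, rfl⟩
    exact ⟨lastParents D, (cim_eq_starCim hD).symm⟩
  · rintro ⟨A, rfl⟩
    have hD := DAGraph.skeleton_ofRank (starJoin n m comp) (apexRank_injective A)
    exact ⟨_, hD, by rw [cim_eq_starCim hD, lastParents_ofRank_apexRank]⟩

lemma starCim_eq_of_isLocal {A A' : Finset (Fin n)} (hA : IsLocal comp A)
    (hA' : IsLocal comp A') : starCim comp A = starCim comp A' := by
  have starCim_eq : ∀ {B : Finset (Fin n)}, IsLocal comp B → ∀ S : Finset (Fin (n + 1)),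
      starCim comp B S = if S.Nonempty ∧
        IsLocal comp (baseTrace S) then 1 else 0 :=
    fun hB S => if_congr ⟨fun ⟨hne, h⟩ => ⟨hne, h.elim id fun h => hB.mono comp h.2⟩,
      fun ⟨hne, h⟩ => ⟨hne, .inl h⟩⟩ rfl rfl
  funext S
  rw [starCim_eq hA, starCim_eq hA']

lemma subset_of_starCim_eq {A A' : Finset (Fin n)} (hA : ¬ IsLocal comp A)
    (h : starCim comp A = starCim comp A') : A ⊆ A' := by
  set S := insert (Fin.last n) (A.map Fin.castSuccEmb)
  have hS : baseTrace S = A := by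
    ext v
    simp [S, Fin.castSucc_ne_last]
  have hA'S : starCim comp A' S = 1 := by
    rw [← h]
    simp [starCim, hS, S]
  simp only [starCim, hS, ite_eq_left_iff, zero_ne_one, imp_false, not_not] at hA'S
  exact hA'S.2.resolve_left hA |>.2

lemma eq_of_starCim_eq {A A' : Finset (Fin n)} (hA : ¬ IsLocal comp A)
    (h : starCim comp A = starCim comp A') : A = A' := by
  have hAA' := subset_of_starCim_eq comp hA h
  exact hAA'.antisymm (subset_of_starCim_eq comp (fun hA' => hA (hA'.mono comp hAA')) h.symm)

lemma card_filter_isLocal :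
    #(univ.filter (IsLocal comp)) =
      1 + ∑ s : Fin m, (2 ^ #(univ.filter fun v => comp v = s) - 1) := by
  have hsplit : univ.filter (IsLocal comp) = insert ∅ (univ.biUnion fun s : Fin m =>
      (univ.filter fun v => comp v = s).powerset.erase ∅) := by
    ext A
    simp only [mem_filter, mem_univ, true_and, mem_insert, mem_biUnion, mem_erase, mem_powerset]
    constructor
    · intro hA
      rcases A.eq_empty_or_nonempty with rfl | ⟨u, hu⟩
      · exact .inl rfl
      · exact .inr ⟨comp u, ne_empty_of_mem hu, fun v hv => by simpa using hA v hv u hu⟩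
    · rintro (rfl | ⟨s, -, hsub⟩) u hu v hv
      · simp at hu
      · exact (mem_filter.1 (hsub hu)).2.trans (mem_filter.1 (hsub hv)).2.symm
  rw [hsplit, card_insert_of_notMem (by simp), card_biUnion, add_comm]
  · simp_rw [card_erase_of_mem (empty_mem_powerset _), card_powerset]
  · intro s _ t _ hst
    refine disjoint_left.2 fun A hAs hAt => ?_
    obtain ⟨v, hv⟩ := nonempty_iff_ne_empty.2 (mem_erase.1 hAs).1
    exact hst ((mem_filter.1 (mem_powerset.1 (mem_erase.1 hAs).2 hv)).2.symm.trans
      (mem_filter.1 (mem_powerset.1 (mem_erase.1 hAt).2 hv)).2)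

end StarJoin

lemma Set.ncard_range_of_const_on {α β : Type*} [Fintype α] {f : α → β} {P : α → Prop}
    [DecidablePred P] {a : α} (ha : P a) (hconst : ∀ x, P x → f x = f a)
    (hsep : ∀ x, ¬ P x → ∀ y, f x = f y → x = y) :
    (Set.range f).ncard = #(Finset.univ.filter fun x => ¬ P x) + 1 := by
  have hrange :
      Set.range f = ↑(insert (f a) ((Finset.univ.filter fun x => ¬ P x).image f)) := by
    ext y
    simp only [Set.mem_range, coe_insert, coe_image, coe_filter, Finset.mem_univ, true_and,
      Set.mem_insert_iff, Set.mem_image]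
    constructor
    · rintro ⟨x, rfl⟩
      by_cases hx : P x
      exacts [.inl (hconst x hx), .inr ⟨x, hx, rfl⟩]
    · rintro (rfl | ⟨x, -, rfl⟩) <;> exact ⟨_, rfl⟩
  rw [hrange, Set.ncard_coe_finset, card_insert_of_notMem, card_image_of_injOn]
  · exact fun x hx y _ hxy => hsep x (by simpa using hx) y hxy
  · simp only [Finset.mem_image, Finset.mem_filter, Finset.mem_univ, true_and, not_exists,
      not_and]
    exact fun x hx hxa => hx (hsep x hx a hxa ▸ ha)

theorem stmt13_general (n m : ℕ) (comp : Fin n → Fin m) :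
    Set.ncard {x : Finset (Fin (n + 1)) → ℝ |
        ∃ D : DAGraph (n + 1), D.skeleton = starJoin n m comp ∧ x = D.cim} =
      2 ^ n - ∑ s : Fin m, (2 ^ (Finset.univ.filter fun v => comp v = s).card - 1) := by
  have hempty : IsLocal comp ∅ := by simp [IsLocal]
  rw [cims_eq_range_starCim, Set.ncard_range_of_const_on hempty
    (fun A hA => starCim_eq_of_isLocal comp hA hempty) (fun A hA _ => eq_of_starCim_eq comp hA)]
  have htotal := card_filter_add_card_filter_not (s := univ) (IsLocal comp)
  rw [card_univ, Fintype.card_finset, Fintype.card_fin, card_filter_isLocal] at htotal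
  omega

/-- If `G'` is a vertex-disjoint union of complete graphs
`K_{p₁}, …, K_{p_m}` on `[p−1]` and `G` adds a vertex adjacent to all of `[p−1]`, the
number of Markov equivalence classes of DAGs with skeleton `G` (i.e. the number of
distinct characteristic imsets) is `2^{p−1} − ∑ₛ (2^{pₛ} − 1)`. -/
theorem stmt13 (n m : ℕ) (comp : Fin n → Fin m) (hsurj : Function.Surjective comp) :
    Set.ncard {x : Finset (Fin (n + 1)) → ℝ |
        ∃ D : DAGraph (n + 1), D.skeleton = starJoin n m comp ∧ x = D.cim} =
      2 ^ n - ∑ s : Fin m, (2 ^ (Finset.univ.filter fun v => comp v = s).card - 1) :=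
  stmt13_general n m comp
end

section
/- Let {G, H} be a budding with respect to (i, j, S*) where the common skeleton G is a tree. Then pa_G(i) = S*, pa_G(j) = {i}, the graph G_{i←j} obtained by reversing the edge i → j in G is a DAG, and G_{i←j} is Markov equivalent to H. -/
open scoped Classical

/-- `{G, H}` is a *budding* with respect to `(i, j, S*)`. -/
noncomputable def Budding {p : ℕ} (G H : DAGraph p) (i j : Fin p)
    (Sstar : Finset (Fin p)) : Prop :=
  i ≠ j ∧ i ∉ Sstar ∧ j ∉ Sstar ∧ 2 ≤ Sstar.card ∧
  G.cim {i, j} = 1 ∧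
  (∀ S ⊆ Sstar, S.Nonempty → G.cim (insert i S) = 1) ∧
  ¬ (∀ s ∈ Sstar, G.skeleton.Adj s j) ∧
  ∀ T : Finset (Fin p), H.cim T = G.cim T +
    (if ∃ S ⊆ Sstar, ¬ (∀ s ∈ S, G.skeleton.Adj s j) ∧ T = S ∪ {i, j} then 1 else 0)

/-! Since the skeleton is a forest, the imset of three vertices `a - b - c` along a path is `1`
exactly when `a → b ← c`. Comparing `c_G` and `c_H` on such triples forces `S* → i → j` in `G`
and `j → i` in `H`, and then `pa_G(i) = S*` and `pa_G(j) = {i}`. Once `i` is the only parent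
of `j`, reversing `i → j` creates no cycle and changes the imset exactly on the sets
`S ∪ {i, j}` with `∅ ≠ S ⊆ pa_G(i)`, which here are the sets of `𝒮⁺`. -/

open SimpleGraph Relation

theorem SimpleGraph.IsAcyclic.not_adj_of_adj_of_adj {V : Type*} {G : SimpleGraph V}
    (hG : G.IsAcyclic) {a b c : V} (hab : G.Adj a b) (hbc : G.Adj b c) : ¬ G.Adj a c := by
  intro hac
  have hc := hG.mem_support_of_ne_mem_support_of_adj_of_isPath (Walk.IsPath.of_adj hab)
    (Walk.IsPath.of_adj hac) hbc (by simp [hab.ne', hbc.ne])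
  simp [hac.ne', hbc.ne'] at hc

section imsetRel

variable {p : ℕ} {E : Fin p → Fin p → Prop} {T : Finset (Fin p)}

theorem imsetRel_eq_one_iff : imsetRel E T = 1 ↔ ∃ v ∈ T, ∀ u ∈ T, u ≠ v → E u v := by
  unfold imsetRel; split_ifs with h <;> simp [h]

theorem imsetRel_eq_zero_iff : imsetRel E T = 0 ↔ ¬ ∃ v ∈ T, ∀ u ∈ T, u ≠ v → E u v := by
  unfold imsetRel; split_ifs with h <;> simp [h]

theorem imsetRel_nonneg : 0 ≤ imsetRel E T := by
  unfold imsetRel; split_ifs <;> norm_num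

theorem imsetRel_le_one : imsetRel E T ≤ 1 := by
  unfold imsetRel; split_ifs <;> norm_num

theorem imsetRel_pair_eq_one_iff {a b : Fin p} (hab : a ≠ b) :
    imsetRel E {a, b} = 1 ↔ E a b ∨ E b a := by
  simp [imsetRel_eq_one_iff, hab, hab.symm, or_comm]

end imsetRel

namespace DAGraph

variable {p : ℕ} (G : DAGraph p)

theorem irrefl (a : Fin p) : ¬ G.E a a :=
  fun h => G.acyclic a (.single h)

theorem asymm {a b : Fin p} (h : G.E a b) : ¬ G.E b a :=
  fun h' => G.acyclic a ((TransGen.single h).tail h')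

theorem cim_triple_eq_one_iff (hG : G.skeleton.IsAcyclic) {a b c : Fin p}
    (hab : G.skeleton.Adj a b) (hbc : G.skeleton.Adj b c) (hac : a ≠ c) :
    G.cim {a, b, c} = 1 ↔ G.E a b ∧ G.E c b := by
  have hnac := hG.not_adj_of_adj_of_adj hab hbc
  rw [cim, imsetRel_eq_one_iff]
  constructor
  · rintro ⟨v, hv, hsink⟩
    simp only [Finset.mem_insert, Finset.mem_singleton] at hv
    rcases hv with rfl | rfl | rfl
    · exact absurd (Or.inr (hsink c (by simp) hac.symm)) hnac
    · exact ⟨hsink a (by simp) hab.ne, hsink c (by simp) hbc.ne'⟩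
    · exact absurd (Or.inl (hsink a (by simp) hac)) hnac
  · rintro ⟨hab', hcb'⟩
    refine ⟨b, by simp, fun u hu hub => ?_⟩
    simp only [Finset.mem_insert, Finset.mem_singleton] at hu
    rcases hu with rfl | rfl | rfl
    exacts [hab', absurd rfl hub, hcb']

theorem cim_triple_eq_one_iff_of_skeleton_eq {H : DAGraph p} (hsk : G.skeleton = H.skeleton)
    (hG : G.skeleton.IsAcyclic) {a b c : Fin p} (hab : G.skeleton.Adj a b)
    (hbc : G.skeleton.Adj b c) (hac : a ≠ c) :
    H.cim {a, b, c} = 1 ↔ H.E a b ∧ H.E c b := by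
  rw [hsk] at hG hab hbc
  exact H.cim_triple_eq_one_iff hG hab hbc hac

end DAGraph

section reverseRel

variable {p : ℕ} {E : Fin p → Fin p → Prop} {i j u v : Fin p}

theorem reverseRel_iff_of_ne (hvi : v ≠ i) (hvj : v ≠ j) : reverseRel E i j u v ↔ E u v := by
  simp [reverseRel, hvi, hvj]

theorem reverseRel_left_iff (hij : i ≠ j) : reverseRel E i j u i ↔ E u i ∨ u = j := by
  simp [reverseRel, hij]

theorem reverseRel_right_iff (hij : i ≠ j) : reverseRel E i j u j ↔ E u j ∧ u ≠ i := by
  simp [reverseRel, hij.symm]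

/-- When `i` is the only parent of `j`, the reversed graph has no edge into `j`, so a cycle
in it would avoid `j` and hence be a cycle of the original graph. -/
theorem reverseRel_acyclic (G : DAGraph p) (hij : i ≠ j) (hpa : ∀ k, G.E k j → k = i)
    (a : Fin p) : ¬ TransGen (reverseRel G.E i j) a a := by
  have hin : ∀ u v, reverseRel G.E i j u v → v ≠ j := by
    rintro u v h rfl
    rw [reverseRel_right_iff hij] at h
    exact h.2 (hpa u h.1)
  have hout : ∀ u v, reverseRel G.E i j u v → u ≠ j → G.E u v := by
    rintro u v (⟨h, -⟩ | ⟨rfl, -⟩) hu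
    exacts [h, absurd rfl hu]
  have hlift : ∀ a b, TransGen (reverseRel G.E i j) a b → a ≠ j → TransGen G.E a b := by
    intro a b h
    induction h using TransGen.head_induction_on with
    | single h => exact fun ha => .single (hout _ _ h ha)
    | head h _ ih => exact fun ha => .head (hout _ _ h ha) (ih (hin _ _ h))
  intro h
  obtain ⟨b, -, hba⟩ := TransGen.tail'_iff.mp h
  exact G.acyclic a (hlift a a h (hin b a hba))

theorem exists_sink_of_exists_sink_reverseRel (hne : i ≠ j) (hij : E i j) {T : Finset (Fin p)}
    (hT : ¬ ∃ S : Finset (Fin p), S.Nonempty ∧ (∀ k ∈ S, E k i) ∧ T = S ∪ {i, j})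
    (h : ∃ v ∈ T, ∀ u ∈ T, u ≠ v → reverseRel E i j u v) :
    ∃ v ∈ T, ∀ u ∈ T, u ≠ v → E u v := by
  obtain ⟨v, hv, hsink⟩ := h
  by_cases hvi : v = i
  · subst hvi
    have hsink' : ∀ u ∈ T, u ≠ v → E u v ∨ u = j :=
      fun u hu huv => (reverseRel_left_iff hne).mp (hsink u hu huv)
    by_cases hjT : j ∈ T
    · have hsub : ∀ u ∈ T, u = v ∨ u = j := by
        intro u hu
        by_contra! hu'
        refine hT ⟨T \ {v, j}, ⟨u, by simp [hu, hu']⟩, fun k hk => ?_, ?_⟩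
        · simp only [Finset.mem_sdiff, Finset.mem_insert, Finset.mem_singleton, not_or] at hk
          exact (hsink' k hk.1 hk.2.1).resolve_right hk.2.2
        · rw [Finset.sdiff_union_of_subset (by simp [Finset.insert_subset_iff, hv, hjT])]
      refine ⟨j, hjT, fun u hu huj => ?_⟩
      obtain rfl := (hsub u hu).resolve_right huj
      exact hij
    · exact ⟨v, hv, fun u hu huv =>
        (hsink' u hu huv).resolve_right (by rintro rfl; exact hjT hu)⟩
  by_cases hvj : v = j
  · subst hvj
    exact ⟨v, hv, fun u hu huv => ((reverseRel_right_iff hne).mp (hsink u hu huv)).1⟩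
  · exact ⟨v, hv, fun u hu huv => (reverseRel_iff_of_ne hvi hvj).mp (hsink u hu huv)⟩

theorem exists_sink_reverseRel_of_exists_sink (hne : i ≠ j) (hpa : ∀ k, E k j → k = i)
    {T : Finset (Fin p)} (h : ∃ v ∈ T, ∀ u ∈ T, u ≠ v → E u v) :
    ∃ v ∈ T, ∀ u ∈ T, u ≠ v → reverseRel E i j u v := by
  obtain ⟨v, hv, hsink⟩ := h
  by_cases hvi : v = i
  · subst hvi
    exact ⟨v, hv, fun u hu huv => (reverseRel_left_iff hne).mpr (Or.inl (hsink u hu huv))⟩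
  by_cases hvj : v = j
  · subst hvj
    by_cases hiT : i ∈ T
    · refine ⟨i, hiT, fun u hu hui => (reverseRel_left_iff hne).mpr (Or.inr ?_)⟩
      by_contra huv
      exact hui (hpa u (hsink u hu huv))
    · exact ⟨v, hv, fun u hu huv => absurd (hpa u (hsink u hu huv) ▸ hu) hiT⟩
  · exact ⟨v, hv, fun u hu huv => (reverseRel_iff_of_ne hvi hvj).mpr (hsink u hu huv)⟩

end reverseRel

namespace DAGraph

variable {p : ℕ} (G : DAGraph p) {i j : Fin p}

theorem imsetRel_reverseRel (hij : G.E i j) (hpa : ∀ k, G.E k j → k = i) (T : Finset (Fin p)) :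
    imsetRel (reverseRel G.E i j) T = G.cim T +
      if ∃ S : Finset (Fin p), S.Nonempty ∧ (∀ k ∈ S, G.E k i) ∧ T = S ∪ {i, j} then 1 else 0 := by
  have hne : i ≠ j := by rintro rfl; exact G.irrefl i hij
  split_ifs with hT
  · obtain ⟨S, ⟨s, hs⟩, hSi, rfl⟩ := hT
    have hSi' : ∀ k ∈ S, i ≠ k := by rintro k hk rfl; exact G.irrefl _ (hSi _ hk)
    have hsink : ∀ u ∈ S ∪ {i, j}, u ≠ i → reverseRel G.E i j u i := by
      intro u hu hui
      rw [reverseRel_left_iff hne]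
      simp only [Finset.mem_union, Finset.mem_insert, Finset.mem_singleton] at hu
      rcases hu with hu | rfl | rfl
      exacts [Or.inl (hSi u hu), absurd rfl hui, Or.inr rfl]
    have hnosink : ¬ ∃ v ∈ S ∪ {i, j}, ∀ u ∈ S ∪ {i, j}, u ≠ v → G.E u v := by
      rintro ⟨v, hv, hsink⟩
      simp only [Finset.mem_union, Finset.mem_insert, Finset.mem_singleton] at hv
      rcases hv with hv | rfl | rfl
      · exact G.asymm (hSi v hv) (hsink i (by simp) (hSi' v hv))
      · exact G.asymm hij (hsink j (by simp) hne.symm)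
      · have hsv : s ≠ v := by rintro rfl; exact G.asymm hij (hSi _ hs)
        exact hSi' s hs (hpa s (hsink s (by simp [hs]) hsv)).symm
    rw [imsetRel_eq_one_iff.mpr ⟨i, by simp, hsink⟩, cim, imsetRel_eq_zero_iff.mpr hnosink,
      zero_add]
  · rw [add_zero, cim]
    exact if_congr ⟨exists_sink_of_exists_sink_reverseRel hne hij hT,
      exists_sink_reverseRel_of_exists_sink hne hpa⟩ rfl rfl

end DAGraph

namespace Budding

variable {p : ℕ} {G H : DAGraph p} {i j : Fin p} {Sstar : Finset (Fin p)}

theorem cim_eq (hbud : Budding G H i j Sstar) (T : Finset (Fin p)) :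
    H.cim T = G.cim T +
      if ∃ S ⊆ Sstar, ¬ (∀ s ∈ S, G.skeleton.Adj s j) ∧ T = S ∪ {i, j} then 1 else 0 :=
  hbud.2.2.2.2.2.2.2 T

theorem right_notMem (hbud : Budding G H i j Sstar) : j ∉ Sstar := hbud.2.2.1

theorem one_lt_card (hbud : Budding G H i j Sstar) : 1 < Sstar.card := hbud.2.2.2.1

theorem cim_eq_of_mem_family (hbud : Budding G H i j Sstar) {T : Finset (Fin p)}
    (hT : ∃ S ⊆ Sstar, ¬ (∀ s ∈ S, G.skeleton.Adj s j) ∧ T = S ∪ {i, j}) :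
    G.cim T = 0 ∧ H.cim T = 1 := by
  have h := hbud.cim_eq T
  rw [if_pos hT] at h
  have hG : 0 ≤ G.cim T := imsetRel_nonneg
  have hH : H.cim T ≤ 1 := imsetRel_le_one
  constructor <;> linarith

theorem cim_eq_of_not_mem_family (hbud : Budding G H i j Sstar) {T : Finset (Fin p)}
    (hT : ¬ T ⊆ Sstar ∪ {i, j} ∨ j ∉ T) : H.cim T = G.cim T := by
  rw [hbud.cim_eq T, if_neg, add_zero]
  rintro ⟨S, hS, -, rfl⟩
  rcases hT with hT | hT
  · exact hT (Finset.union_subset_union hS le_rfl)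
  · exact hT (by simp)

theorem exists_mem_not_adj (hbud : Budding G H i j Sstar) :
    ∃ s ∈ Sstar, ¬ G.skeleton.Adj s j := by
  have ⟨_, _, _, _, _, _, h, _⟩ := hbud
  push Not at h
  exact h

theorem cim_triple_of_not_adj (hbud : Budding G H i j Sstar) {s : Fin p} (hs : s ∈ Sstar)
    (hsj : ¬ G.skeleton.Adj s j) : G.cim {s, i, j} = 0 ∧ H.cim {s, i, j} = 1 :=
  hbud.cim_eq_of_mem_family ⟨{s}, by simpa, by simpa, Finset.insert_eq _ _⟩

theorem skeleton_adj_of_mem (hbud : Budding G H i j Sstar) {s : Fin p} (hs : s ∈ Sstar) :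
    G.skeleton.Adj i s := by
  have ⟨_, hiS, _, _, _, hins, _, _⟩ := hbud
  have his : i ≠ s := by rintro rfl; exact hiS hs
  exact (imsetRel_pair_eq_one_iff his).mp (hins {s} (by simpa) (by simp))

theorem edge_of_mem (hbud : Budding G H i j Sstar) (hG : G.skeleton.IsAcyclic) {s : Fin p}
    (hs : s ∈ Sstar) : G.E s i := by
  have ⟨_, _, _, _, _, hins, _, _⟩ := hbud
  obtain ⟨t, ht, hts⟩ := Finset.exists_mem_ne hbud.one_lt_card s
  have h := hins {s, t} (by simp [Finset.insert_subset_iff, hs, ht]) (by simp)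
  rw [Finset.insert_comm] at h
  exact ((G.cim_triple_eq_one_iff hG (hbud.skeleton_adj_of_mem hs).symm
    (hbud.skeleton_adj_of_mem ht) hts.symm).mp h).1

theorem edge_ij (hbud : Budding G H i j Sstar) (hG : G.skeleton.IsAcyclic) : G.E i j := by
  have ⟨hne, _, _, _, hpair, _, _, _⟩ := hbud
  obtain ⟨s, hs, hsj⟩ := hbud.exists_mem_not_adj
  have hsj' : s ≠ j := by rintro rfl; exact hbud.right_notMem hs
  have hij : G.skeleton.Adj i j := (imsetRel_pair_eq_one_iff hne).mp hpair
  refine hij.resolve_right fun hji => ?_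
  have h := (G.cim_triple_eq_one_iff hG (hbud.skeleton_adj_of_mem hs).symm hij hsj').mpr
    ⟨hbud.edge_of_mem hG hs, hji⟩
  rw [(hbud.cim_triple_of_not_adj hs hsj).1] at h
  norm_num at h

theorem not_adj_of_mem (hbud : Budding G H i j Sstar) (hG : G.skeleton.IsAcyclic) {s : Fin p}
    (hs : s ∈ Sstar) : ¬ G.skeleton.Adj s j :=
  hG.not_adj_of_adj_of_adj (hbud.skeleton_adj_of_mem hs).symm (Or.inl (hbud.edge_ij hG))

theorem H_edge_ji (hbud : Budding G H i j Sstar) (hG : G.skeleton.IsAcyclic)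
    (hsk : G.skeleton = H.skeleton) : H.E j i := by
  obtain ⟨s, hs, hsj⟩ := hbud.exists_mem_not_adj
  have hsj' : s ≠ j := by rintro rfl; exact hbud.right_notMem hs
  exact ((G.cim_triple_eq_one_iff_of_skeleton_eq hsk hG (hbud.skeleton_adj_of_mem hs).symm
    (Or.inl (hbud.edge_ij hG)) hsj').mp (hbud.cim_triple_of_not_adj hs hsj).2).2

/-- A parent `k ∉ S*` of `i` would make `k → i` an edge of `H` (compare imsets on `{k, i, s}`)
and then `k → i ← j` a v-structure of `H` but not of `G`. -/
theorem mem_of_edge (hbud : Budding G H i j Sstar) (hG : G.skeleton.IsAcyclic)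
    (hsk : G.skeleton = H.skeleton) {k : Fin p} (hk : G.E k i) : k ∈ Sstar := by
  by_contra hkS
  have hij := hbud.edge_ij hG
  obtain ⟨s, hs⟩ : Sstar.Nonempty := Finset.card_pos.mp (by have := hbud.one_lt_card; omega)
  have hki : G.skeleton.Adj k i := Or.inl hk
  have hks : k ≠ s := by rintro rfl; exact hkS hs
  have hkj : k ≠ j := by rintro rfl; exact G.asymm hij hk
  have hsj : s ≠ j := by rintro rfl; exact hbud.right_notMem hs
  have hHki : H.E k i := by
    have h := (G.cim_triple_eq_one_iff hG hki (hbud.skeleton_adj_of_mem hs) hks).mpr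
      ⟨hk, hbud.edge_of_mem hG hs⟩
    rw [← hbud.cim_eq_of_not_mem_family (Or.inr (by simp [hkj.symm, hbud.1.symm, hsj.symm])),
      G.cim_triple_eq_one_iff_of_skeleton_eq hsk hG hki (hbud.skeleton_adj_of_mem hs) hks] at h
    exact h.1
  have h := (G.cim_triple_eq_one_iff_of_skeleton_eq hsk hG hki (Or.inl hij) hkj).mpr
    ⟨hHki, hbud.H_edge_ji hG hsk⟩
  rw [hbud.cim_eq_of_not_mem_family (Or.inl fun h => by
      simpa [hkS, hki.ne, hkj] using h (Finset.mem_insert_self k _)),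
    G.cim_triple_eq_one_iff hG hki (Or.inl hij) hkj] at h
  exact G.asymm hij h.2

theorem eq_of_edge (hbud : Budding G H i j Sstar) (hG : G.skeleton.IsAcyclic)
    (hsk : G.skeleton = H.skeleton) {k : Fin p} (hk : G.E k j) : k = i := by
  by_contra hki
  have hij := hbud.edge_ij hG
  have hkS : k ∉ Sstar := fun hs => hbud.not_adj_of_mem hG hs (Or.inl hk)
  have hkj : k ≠ j := by rintro rfl; exact G.irrefl _ hk
  have h := (G.cim_triple_eq_one_iff hG (Or.inl hk) (Or.inr hij) hki).mpr ⟨hk, hij⟩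
  rw [← hbud.cim_eq_of_not_mem_family (Or.inl fun h => by
      simpa [hkS, hki, hkj] using h (Finset.mem_insert_self k _)),
    G.cim_triple_eq_one_iff_of_skeleton_eq hsk hG (Or.inl hk) (Or.inr hij) hki] at h
  exact H.asymm (hbud.H_edge_ji hG hsk) h.2

theorem mem_family_iff (hbud : Budding G H i j Sstar) (hG : G.skeleton.IsAcyclic)
    (hsk : G.skeleton = H.skeleton) (T : Finset (Fin p)) :
    (∃ S ⊆ Sstar, ¬ (∀ s ∈ S, G.skeleton.Adj s j) ∧ T = S ∪ {i, j}) ↔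
      ∃ S : Finset (Fin p), S.Nonempty ∧ (∀ k ∈ S, G.E k i) ∧ T = S ∪ {i, j} := by
  constructor
  · rintro ⟨S, hS, hadj, rfl⟩
    push Not at hadj
    obtain ⟨s, hs, -⟩ := hadj
    exact ⟨S, ⟨s, hs⟩, fun k hk => hbud.edge_of_mem hG (hS hk), rfl⟩
  · rintro ⟨S, ⟨s, hs⟩, hSi, rfl⟩
    exact ⟨S, fun k hk => hbud.mem_of_edge hG hsk (hSi k hk),
      fun h => hbud.not_adj_of_mem hG (hbud.mem_of_edge hG hsk (hSi s hs)) (h s hs), rfl⟩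

end Budding

/-- If `{G, H}` is a budding with respect to `(i, j, S*)` and the common
skeleton is a tree, then `pa_G(i) = S*`, `pa_G(j) = {i}`, reversing the edge `i → j` in `G`
yields a DAG, and that DAG is Markov equivalent to `H`. -/
theorem stmt17 {p : ℕ} (G H : DAGraph p) (i j : Fin p) (Sstar : Finset (Fin p))
    (hsk : G.skeleton = H.skeleton) (htree : G.skeleton.IsTree)
    (hbud : Budding G H i j Sstar) :
    G.E i j ∧
    {k | G.E k i} = (Sstar : Set (Fin p)) ∧
    {k | G.E k j} = {i} ∧
    (∀ a, ¬ Relation.TransGen (reverseRel G.E i j) a a) ∧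
    (∀ T : Finset (Fin p), imsetRel (reverseRel G.E i j) T = H.cim T) := by
  have hG := htree.isAcyclic
  have hij := hbud.edge_ij hG
  have hpa_j : ∀ k, G.E k j → k = i := fun k => hbud.eq_of_edge hG hsk
  refine ⟨hij, Set.ext fun k => ⟨hbud.mem_of_edge hG hsk, hbud.edge_of_mem hG⟩,
    Set.ext fun k => ⟨hpa_j k, by rintro rfl; exact hij⟩, reverseRel_acyclic G hbud.1 hpa_j,
    fun T => ?_⟩
  rw [G.imsetRel_reverseRel hij hpa_j, hbud.cim_eq T]
  exact congrArg (G.cim T + ·) (if_congr (hbud.mem_family_iff hG hsk T).symm rfl rfl)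
end
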